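/- arXiv:2111.08328 — 4 statements merged into one kernel-verified Lean document; each statement's English description precedes it below -/
import Mathlib

section
/- Let (D,𝕋) be a trip network, τ a temporalisation, u,v nodes, and k∈ℕ. If there exists a temporal path from u to v in G[D,𝕋,τ] whose edges are induced by at most k distinct trips of 𝕋, then there exists a temporal path from u to v in G[D,𝕋,τ] whose edges are induced by at most k distinct trips of 𝕋 and in which, for each trip, the edges induced by that trip occur consecutively. -/
/-- A weighted directed edge of a weighted directed multigraph. -/
structure DEdge (V : Type) where
  tail : V
  head : V
  weight : ℝ

/-- A temporal edge: tail, head, starting time and (positive) travel time. -/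
structure TEdge (V : Type) where
  tail : V
  head : V
  time : ℝ
  travel : ℝ

/-- A trip: a nonempty walk, i.e. consecutive edges match head-to-tail. -/
def IsWalk {V : Type} (T : List (DEdge V)) : Prop :=
  T ≠ [] ∧ T.Chain' fun e f => e.head = f.tail

/-- A trip network: every trip is a walk with positive weights, and every node
appears in some trip (the edges of `D` are exactly the edges of the trips). -/
def IsTripNetwork {V : Type} (trips : List (List (DEdge V))) : Prop :=
  (∀ T ∈ trips, IsWalk T ∧ ∀ e ∈ T, 0 < e.weight) ∧
  ∀ v : V, ∃ T ∈ trips, ∃ e ∈ T, e.tail = v ∨ e.head = v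

/-- A temporal path from `u` to `v` in the temporal graph `G`. -/
def IsTemporalPath {V : Type} (G : Set (TEdge V)) (p : List (TEdge V)) (u v : V) : Prop :=
  p ≠ [] ∧ (∀ f ∈ p, f ∈ G) ∧
  (p.Chain' fun e f => e.head = f.tail ∧ e.time + e.travel ≤ f.time) ∧
  p.head?.map TEdge.tail = some u ∧ p.getLast?.map TEdge.head = some v

/-- Temporal reachability (every node temporally reaches itself). -/
def TReachable {V : Type} (G : Set (TEdge V)) (u v : V) : Prop :=
  u = v ∨ ∃ p, IsTemporalPath G p u v

/-- The temporal edges induced by a trip with starting time `t`. -/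
def tripTEdges {V : Type} : List (DEdge V) → ℝ → List (TEdge V)
  | [], _ => []
  | e :: es, t => ⟨e.tail, e.head, t, e.weight⟩ :: tripTEdges es (t + e.weight)

/-- The temporal graph induced by a temporalisation `τ` assigning a starting
time to each trip (index) of the collection. -/
def inducedTG {V : Type} (trips : List (List (DEdge V))) (τ : ℕ → ℝ) : Set (TEdge V) :=
  { f | ∃ i : Fin trips.length, f ∈ tripTEdges (trips.get i) (τ i.1) }

/-- The duration of a trip: the sum of the weights of its edges. -/
def tripDuration {V : Type} (T : List (DEdge V)) : ℝ :=
  (T.map DEdge.weight).sum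

/-- Starting time of the `i`-th trip of a schedule: the sum of the durations of
the previous trips. -/
def scheduleTimes {V : Type} (S : List (List (DEdge V))) (i : ℕ) : ℝ :=
  ((S.take i).map tripDuration).sum

/-- The temporal graph induced by a schedule (an ordering of the trips). -/
def scheduleTG {V : Type} (S : List (List (DEdge V))) : Set (TEdge V) :=
  inducedTG S (scheduleTimes S)

/-- The number of ordered pairs `(u, v)` of nodes such that `v` is temporally
reachable from `u` in `G`. -/
noncomputable def reachCount {V : Type} [Fintype V] (G : Set (TEdge V)) : ℕ :=
  Nat.card {p : V × V // TReachable G p.1 p.2}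

/-- `(s,t)`-temporalisability. -/
def Temporalisable {V : Type} (trips : List (List (DEdge V))) (s t : V) : Prop :=
  ∃ τ : ℕ → ℝ, TReachable (inducedTG trips τ) s t

/-- Strong temporalisability. -/
def StronglyTemporalisable {V : Type} (trips : List (List (DEdge V))) : Prop :=
  ∀ s t : V, Temporalisable trips s t

/-- The sequence of nodes visited by a trip. -/
def tripNodes {V : Type} (T : List (DEdge V)) : List V :=
  T.map DEdge.tail ++ (T.getLast?.map DEdge.head).toList

/-- A symmetric trip collection: the trips can be grouped into disjoint pairs
`(T, T̄)` where `T̄` visits the same nodes as `T` in reverse order. -/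
def IsSymmetricTrips {V : Type} (trips : List (List (DEdge V))) : Prop :=
  ∃ ps : List (List (DEdge V) × List (DEdge V)),
    trips.Perm (ps.flatMap fun p => [p.1, p.2]) ∧
    ∀ p ∈ ps, tripNodes p.2 = (tripNodes p.1).reverse

/-- Reachability by a walk in the underlying multidigraph. -/
def DReachable {V : Type} (trips : List (List (DEdge V))) (u v : V) : Prop :=
  Relation.ReflTransGen (fun a b => ∃ T ∈ trips, ∃ e ∈ T, e.tail = a ∧ e.head = b) u v

/-- The temporal edge `f` is induced by the trip of index `i` under the
temporalisation `τ`. -/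
def InducedBy {V : Type} (trips : List (List (DEdge V))) (τ : ℕ → ℝ) (i : ℕ)
    (f : TEdge V) : Prop :=
  ∃ h : i < trips.length, f ∈ tripTEdges (trips.get ⟨i, h⟩) (τ i)

namespace TripConsec

variable {V : Type}


/-- Number of adjacent unequal pairs in a list. -/
def bnd : List ℕ → ℕ
  | [] => 0
  | [_] => 0
  | x :: y :: l => (if x = y then 0 else 1) + bnd (y :: l)

lemma bnd_cons_cons (x y : ℕ) (l : List ℕ) :
    bnd (x :: y :: l) = (if x = y then 0 else 1) + bnd (y :: l) := rfl

lemma bnd_append_cons (A : List ℕ) (x : ℕ) (B : List ℕ) :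
    bnd (A ++ x :: B) = bnd (A ++ [x]) + bnd (x :: B) := by
  induction A with
  | nil =>
    cases B <;> simp [bnd]
  | cons a A ih =>
    cases A with
    | nil =>
      simp only [List.cons_append, List.nil_append, bnd_cons_cons]
      have : bnd [x] = 0 := rfl
      have : bnd [a, x] = (if a = x then 0 else 1) + bnd [x] := rfl
      omega
    | cons a' A' =>
      simp only [List.cons_append] at ih ⊢
      rw [bnd_cons_cons, bnd_cons_cons, ih]
      omega

lemma bnd_cons_replicate (m i : ℕ) (Y : List ℕ) :
    bnd (i :: (List.replicate m i ++ Y)) = bnd (i :: Y) := by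
  induction m with
  | zero => simp
  | succ m ih =>
    rw [List.replicate_succ, List.cons_append, bnd_cons_cons, if_pos rfl, ih, Nat.zero_add]

lemma one_le_bnd (l : List ℕ) : ∀ (y i : ℕ), y ≠ i → (y :: l).getLast? = some i →
    1 ≤ bnd (y :: l) := by
  induction l with
  | nil => intro y i hy h; simp at h; exact absurd h hy
  | cons z t ih =>
    intro y i hy h
    rw [List.getLast?_cons_cons] at h
    rw [bnd_cons_cons]
    by_cases hyz : y = z
    · have := ih z i (hyz ▸ hy) h
      omega
    · simp [hyz]

lemma two_le_bnd (l : List ℕ) : ∀ i : ℕ, (∃ x ∈ l, x ≠ i) → l.getLast? = some i →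
    2 ≤ bnd (i :: l) := by
  induction l with
  | nil => rintro i ⟨x, hx, -⟩ -; simp at hx
  | cons y t ih =>
    rintro i ⟨x, hx, hxi⟩ h
    by_cases hy : y = i
    · subst hy
      have hxt : x ∈ t := by
        rcases List.mem_cons.mp hx with rfl | h'
        · exact absurd rfl hxi
        · exact h'
      have ht : t ≠ [] := List.ne_nil_of_mem hxt
      obtain ⟨z, t', rfl⟩ : ∃ z t', t = z :: t' := by
        cases t with
        | nil => exact absurd rfl ht
        | cons z t' => exact ⟨z, t', rfl⟩
      rw [List.getLast?_cons_cons] at h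
      have := ih y ⟨x, hxt, hxi⟩ h
      rw [bnd_cons_cons, if_pos rfl]
      omega
    · cases t with
      | nil =>
        simp at h
        exact absurd h hy
      | cons z t' =>
        rw [List.getLast?_cons_cons] at h
        have h1 := one_le_bnd (z :: t') y i hy h
        rw [bnd_cons_cons, if_neg (fun hh => hy hh.symm)]
        omega

lemma bnd_surgery (X Y M : List ℕ) (i : ℕ) (h0 : M.head? = some i)
    (hlast : M.getLast? = some i) (x : ℕ) (hx : x ∈ M) (hxi : x ≠ i)
    (L : ℕ) (hL : 1 ≤ L) :
    bnd (X ++ List.replicate L i ++ Y) + 2 ≤ bnd (X ++ M ++ Y) := by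
  obtain ⟨rest, rfl⟩ : ∃ rest, M = i :: rest := by
    cases M with
    | nil => simp at h0
    | cons m0 rest =>
      have : m0 = i := by simpa using h0
      exact ⟨rest, by rw [this]⟩
  have hxrest : x ∈ rest := by
    rcases List.mem_cons.mp hx with rfl | h'
    · exact absurd rfl hxi
    · exact h'
  have hrest : rest ≠ [] := List.ne_nil_of_mem hxrest
  have hlast' : rest.getLast hrest = i := by
    have h1 : (i :: rest).getLast (List.cons_ne_nil _ _) = i := by
      rw [List.getLast?_eq_getLast_of_ne_nil (List.cons_ne_nil _ _)] at hlast
      simpa using hlast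
    rwa [List.getLast_cons hrest] at h1
  set rest' := rest.dropLast with hrest'
  have hdecomp : rest' ++ [i] = rest := by
    rw [← hlast']
    exact List.dropLast_append_getLast hrest
  have hR : bnd (X ++ (i :: rest) ++ Y) =
      bnd (X ++ [i]) + (bnd (i :: (rest' ++ [i])) + bnd (i :: Y)) := by
    have e1 : X ++ (i :: rest) ++ Y = X ++ i :: (rest' ++ i :: Y) := by
      rw [← hdecomp]; simp
    rw [e1, bnd_append_cons]
    congr 1
    have e2 : i :: (rest' ++ i :: Y) = (i :: rest') ++ i :: Y := by simp
    rw [e2, bnd_append_cons]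
    simp
  obtain ⟨L', rfl⟩ : ∃ L', L = L' + 1 := ⟨L - 1, by omega⟩
  have hLhs : bnd (X ++ List.replicate (L' + 1) i ++ Y) =
      bnd (X ++ [i]) + bnd (i :: Y) := by
    rw [List.replicate_succ]
    have e3 : X ++ (i :: List.replicate L' i) ++ Y = X ++ i :: (List.replicate L' i ++ Y) := by
      simp
    rw [e3, bnd_append_cons, bnd_cons_replicate]
  have h2 : 2 ≤ bnd (i :: (rest' ++ [i])) := by
    refine two_le_bnd _ i ⟨x, ?_, hxi⟩ List.getLast?_concat
    rw [hdecomp]; exact hxrest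
  omega



lemma tripTEdges_length (T : List (DEdge V)) (t : ℝ) :
    (tripTEdges T t).length = T.length := by
  induction T generalizing t with
  | nil => rfl
  | cons e es ih => simp [tripTEdges, ih]

/-- Prefix sum of weights. -/
def WS (T : List (DEdge V)) (m : ℕ) : ℝ := ((T.take m).map DEdge.weight).sum

lemma tripTEdges_getElem (T : List (DEdge V)) (t : ℝ) (m : ℕ) (hm : m < T.length) :
    (tripTEdges T t)[m]'(by rw [tripTEdges_length]; exact hm) =
      ⟨(T[m]'hm).tail, (T[m]'hm).head, t + WS T m, (T[m]'hm).weight⟩ := by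
  induction T generalizing t m with
  | nil => simp at hm
  | cons e es ih =>
    cases m with
    | zero => simp [tripTEdges, WS]
    | succ m =>
      have hm' : m < es.length := by simpa using hm
      have := ih (t + e.weight) m hm'
      simp only [tripTEdges, List.getElem_cons_succ]
      rw [this]
      simp [WS, add_assoc]

lemma WS_succ (T : List (DEdge V)) (m : ℕ) (hm : m < T.length) :
    WS T (m + 1) = WS T m + (T[m]'hm).weight := by
  unfold WS
  rw [List.take_succ, List.getElem?_eq_getElem hm, Option.toList_some, List.map_append,
    List.sum_append]
  simp

lemma WS_mono (T : List (DEdge V)) (hw : ∀ e ∈ T, 0 < e.weight) {m m' : ℕ}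
    (h : m ≤ m') : WS T m ≤ WS T m' := by
  unfold WS
  rw [show m' = m + (m' - m) by omega, List.take_add, List.map_append, List.sum_append]
  have : 0 ≤ (((T.drop m).take (m' - m)).map DEdge.weight).sum := by
    apply List.sum_nonneg
    intro x hx
    obtain ⟨e, he, rfl⟩ := List.mem_map.mp hx
    have : e ∈ T := ((List.take_sublist _ _).trans (List.drop_sublist _ _)).mem he
    exact le_of_lt (hw e this)
  linarith

lemma time_mono {P : List (TEdge V)}
    (hc : P.Chain' fun e f => e.head = f.tail ∧ e.time + e.travel ≤ f.time)
    (hpos : ∀ f ∈ P, 0 < f.travel) :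
    ∀ a c : ℕ, ∀ h1 : a < c, ∀ h2 : c < P.length,
      (P[a]'(h1.trans h2)).time + (P[a]'(h1.trans h2)).travel ≤ (P[c]'h2).time := by
  have hstep : ∀ m, (hm : m + 1 < P.length) →
      (P[m]'(by omega)).time + (P[m]'(by omega)).travel ≤ (P[m+1]'hm).time := by
    intro m hm
    have := (List.isChain_iff_getElem.mp hc) m (by omega)
    simpa [List.get_eq_getElem] using this.2
  intro a c
  induction c with
  | zero => intro h1 _; exact absurd h1 (by omega)
  | succ c ih =>
    intro hac h2
    by_cases hca : c = a
    · subst hca; exact hstep c h2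
    · have hac' : a < c := by omega
      have hc2 : c < P.length := by omega
      have h1 := ih hac' hc2
      have h3 := hpos (P[c]'hc2) (List.getElem_mem _)
      have h4 := hstep c h2
      linarith


variable {V : Type}

lemma getElem_idx_congr {α : Type} (l : List α) {p q : ℕ} (hpq : p = q)
    (hq : q < l.length) : l[p]'(hpq ▸ hq) = l[q]'hq := by subst hpq; rfl

lemma tripTEdges_tail (T : List (DEdge V)) (t : ℝ) (m : ℕ) (hm : m < T.length)
    (hm' : m < (tripTEdges T t).length) :
    ((tripTEdges T t)[m]'hm').tail = (T[m]'hm).tail :=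
  congrArg TEdge.tail (tripTEdges_getElem T t m hm)

lemma tripTEdges_head (T : List (DEdge V)) (t : ℝ) (m : ℕ) (hm : m < T.length)
    (hm' : m < (tripTEdges T t).length) :
    ((tripTEdges T t)[m]'hm').head = (T[m]'hm).head :=
  congrArg TEdge.head (tripTEdges_getElem T t m hm)

lemma tripTEdges_time (T : List (DEdge V)) (t : ℝ) (m : ℕ) (hm : m < T.length)
    (hm' : m < (tripTEdges T t).length) :
    ((tripTEdges T t)[m]'hm').time = t + WS T m :=
  congrArg TEdge.time (tripTEdges_getElem T t m hm)

lemma tripTEdges_travel (T : List (DEdge V)) (t : ℝ) (m : ℕ) (hm : m < T.length)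
    (hm' : m < (tripTEdges T t).length) :
    ((tripTEdges T t)[m]'hm').travel = (T[m]'hm).weight :=
  congrArg TEdge.travel (tripTEdges_getElem T t m hm)

lemma key (trips : List (List (DEdge V))) (hN : IsTripNetwork trips)
    (τ : ℕ → ℝ) (u v : V) :
    ∀ N : ℕ, ∀ (P : List (TEdge V)) (g : ℕ → ℕ),
      IsTemporalPath (inducedTG trips τ) P u v →
      (∀ (a : ℕ) (ha : a < P.length), InducedBy trips τ (g a) (P.get ⟨a, ha⟩)) →
      bnd ((List.range P.length).map g) ≤ N →
      ∃ (P' : List (TEdge V)) (g' : ℕ → ℕ),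
        IsTemporalPath (inducedTG trips τ) P' u v ∧
        (∀ (a : ℕ) (ha : a < P'.length), InducedBy trips τ (g' a) (P'.get ⟨a, ha⟩)) ∧
        (Finset.range P'.length).image g' ⊆ (Finset.range P.length).image g ∧
        ∀ a b c : ℕ, a ≤ b → b ≤ c → c < P'.length → g' a = g' c → g' b = g' a := by
  intro N
  induction N using Nat.strong_induction_on with
  | _ N IH =>
  intro P g hP hInd hbnd
  by_cases hcon : ∀ a b c : ℕ, a ≤ b → b ≤ c → c < P.length → g a = g c → g b = g a
  · exact ⟨P, g, hP, hInd, Finset.Subset.refl _, hcon⟩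
  push_neg at hcon
  obtain ⟨a, b, c, hab, hbc, hc, hac, hba⟩ := hcon
  obtain ⟨hne, hmemG, hchain, hhead, hlast⟩ := hP
  set n := P.length with hn
  have hnpos : 0 < n := List.length_pos_iff.mpr hne
  have halb : a < b := lt_of_le_of_ne hab (fun h => hba (by rw [← h]))
  have hblc : b < c := lt_of_le_of_ne hbc (fun h => hba (by rw [h, ← hac]))
  have ha : a < n := by omega
  obtain ⟨hi, hmema⟩ := hInd a ha
  have hmemc : P.get ⟨c, hc⟩ ∈ tripTEdges (trips.get ⟨g a, hi⟩) (τ (g a)) := by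
    obtain ⟨hi', hm⟩ := hInd c hc
    have e : (⟨g c, hi'⟩ : Fin trips.length) = ⟨g a, hi⟩ := Fin.ext hac.symm
    rw [e] at hm
    rw [← hac] at hm
    exact hm
  set T := trips.get ⟨g a, hi⟩ with hTdef
  set t := τ (g a) with htdef
  have hTElen : (tripTEdges T t).length = T.length := tripTEdges_length T t
  obtain ⟨j, hjTE, hja⟩ := List.mem_iff_getElem.mp hmema
  obtain ⟨j', hj'TE, hjc⟩ := List.mem_iff_getElem.mp hmemc
  have hjT : j < T.length := hTElen ▸ hjTE
  have hj'T : j' < T.length := hTElen ▸ hj'TE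
  have hTin : T ∈ trips := by rw [hTdef]; exact List.get_mem trips _
  obtain ⟨⟨hTne, hTwalk⟩, hTw⟩ := hN.1 T hTin
  have hgetA : (tripTEdges T t)[j]'hjTE = P[a]'ha := by
    simpa [List.get_eq_getElem] using hja
  have hgetC : (tripTEdges T t)[j']'hj'TE = P[c]'hc := by
    simpa [List.get_eq_getElem] using hjc
  -- positivity of travel times
  have hPpos : ∀ f ∈ P, 0 < f.travel := by
    intro f hf
    obtain ⟨idx, hfm⟩ := hmemG f hf
    obtain ⟨m, hmlen, hme⟩ := List.mem_iff_getElem.mp hfm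
    have hmlen' : m < (trips.get idx).length := by
      rwa [tripTEdges_length] at hmlen
    have : f.travel = ((trips.get idx)[m]'hmlen').weight := by
      rw [← hme]; exact tripTEdges_travel _ _ m hmlen' hmlen
    rw [this]
    exact (hN.1 _ (List.get_mem trips idx)).2 _ (List.getElem_mem _)
  -- getElem versions of chain facts
  have hPchain : ∀ m, ∀ hm : m + 1 < n,
      (P[m]'(by omega)).head = (P[m+1]'hm).tail ∧
      (P[m]'(by omega)).time + (P[m]'(by omega)).travel ≤ (P[m+1]'hm).time := by
    intro m hm
    have := List.isChain_iff_getElem.mp hchain m (by omega)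
    simpa [List.get_eq_getElem] using this
  have hTstep : ∀ m, ∀ hm : m + 1 < T.length,
      (T[m]'(by omega)).head = (T[m+1]'hm).tail := by
    intro m hm
    have := List.isChain_iff_getElem.mp hTwalk m (by omega)
    simpa [List.get_eq_getElem] using this
  have hu : (P[0]'hnpos).tail = u := by
    rw [List.head?_eq_getElem?, List.getElem?_eq_getElem hnpos] at hhead
    simpa using hhead
  have hv : (P[n-1]'(by omega)).head = v := by
    rw [List.getLast?_eq_getElem?,
      List.getElem?_eq_getElem (show n - 1 < P.length by omega)] at hlast
    simpa using hlast
  -- j < j'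
  have hjj' : j < j' := by
    have hmono := time_mono hchain hPpos a c (by omega) hc
    have hta : (P[a]'ha).time = t + WS T j := by
      rw [← hgetA]; exact tripTEdges_time T t j hjT hjTE
    have htrava : (P[a]'ha).travel = (T[j]'hjT).weight := by
      rw [← hgetA]; exact tripTEdges_travel T t j hjT hjTE
    have htc : (P[c]'hc).time = t + WS T j' := by
      rw [← hgetC]; exact tripTEdges_time T t j' hj'T hj'TE
    rw [hta, htrava, htc] at hmono
    by_contra hle
    push_neg at hle
    have h2 := WS_mono T hTw hle
    have h3 : WS T j < WS T (j + 1) := by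
      rw [WS_succ T j hjT]
      have := hTw _ (List.getElem_mem hjT)
      linarith
    have h4 : WS T (j + 1) ≤ WS T j' := by
      rw [WS_succ T j hjT]; linarith
    linarith
  set L := j' + 1 - j with hLdef
  have hjL : j + L = j' + 1 := by omega
  have hL2 : 2 ≤ L := by omega
  set len' := a + L + (n - (c + 1)) with hlen'def
  set F : ℕ → TEdge V := fun m =>
    if m < a then P.getD m ⟨u, u, 0, 0⟩
    else if m < a + L then (tripTEdges T t).getD (j + (m - a)) ⟨u, u, 0, 0⟩
    else P.getD (c + 1 + (m - (a + L))) ⟨u, u, 0, 0⟩ with hFdef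
  set P2 : List (TEdge V) := (List.range len').map F with hP2def
  have hP2len : P2.length = len' := by simp [hP2def]
  have hFpre : ∀ m, ∀ _ : m < a, F m = P[m]'(by omega) := by
    intro m hm
    simp only [hFdef]
    rw [if_pos hm, List.getD_eq_getElem _ _ (show m < P.length by omega)]
  have hFseg' : ∀ m (h1 : a ≤ m) (h2 : m < a + L),
      F m = (tripTEdges T t)[j + (m - a)]'(by omega) := by
    intro m h1 h2
    simp only [hFdef]
    rw [if_neg (by omega), if_pos h2,
      List.getD_eq_getElem _ _ (show j + (m - a) < (tripTEdges T t).length by omega)]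
  have hFsuf' : ∀ m (h1 : a + L ≤ m) (h2 : m < len'),
      F m = P[c + 1 + (m - (a + L))]'(by omega) := by
    intro m h1 h2
    simp only [hFdef]
    rw [if_neg (by omega), if_neg (by omega),
      List.getD_eq_getElem _ _ (show c + 1 + (m - (a + L)) < P.length by omega)]
  -- chain step for F
  have hstepF : ∀ m, ∀ _ : m + 1 < len',
      (F m).head = (F (m+1)).tail ∧ (F m).time + (F m).travel ≤ (F (m+1)).time := by
    intro m hm
    by_cases h1 : m + 1 < a
    · rw [hFpre m (by omega), hFpre (m+1) h1]
      exact hPchain m (by omega)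
    by_cases h2 : m + 1 = a
    · rw [hFpre m (by omega)]
      have e2 : F (m + 1) = P[a]'ha := by
        rw [h2, hFseg' a le_rfl (by omega), ← hgetA]
        exact getElem_idx_congr _ (by omega) hjTE
      rw [e2]
      have e4 : P[m+1]'(by omega) = P[a]'ha := getElem_idx_congr _ h2 ha
      have := hPchain m (by omega)
      rw [e4] at this
      exact this
    by_cases h3 : m + 1 < a + L
    · have hma : a ≤ m := by omega
      have eqm : F m = (tripTEdges T t)[j + (m - a)]'(by omega) :=
        hFseg' m hma (by omega)
      have eqm1 : F (m+1) = (tripTEdges T t)[j + (m - a) + 1]'(by omega) := by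
        rw [hFseg' (m+1) (by omega) h3]
        exact getElem_idx_congr _ (by omega) (by omega)
      rw [eqm, eqm1]
      have hp : j + (m - a) < T.length := by omega
      have hp1 : j + (m - a) + 1 < T.length := by omega
      constructor
      · rw [tripTEdges_head T t _ hp, tripTEdges_tail T t _ hp1]
        exact hTstep _ hp1
      · rw [tripTEdges_time T t _ hp, tripTEdges_travel T t _ hp,
          tripTEdges_time T t _ hp1, WS_succ T _ hp]
        linarith
    by_cases h4 : m + 1 = a + L
    · have hc1 : c + 1 < n := by omega
      have eqm : F m = P[c]'hc := by
        rw [hFseg' m (by omega) (by omega), ← hgetC]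
        exact getElem_idx_congr _ (by omega) hj'TE
      have eqm1 : F (m + 1) = P[c + 1]'hc1 := by
        rw [hFsuf' (m+1) (by omega) hm]
        exact getElem_idx_congr _ (by omega) hc1
      rw [eqm, eqm1]
      exact hPchain c hc1
    · have hma : a + L ≤ m := by omega
      have hb1 : c + 1 + (m - (a + L)) + 1 < n := by omega
      have eqm : F m = P[c + 1 + (m - (a + L))]'(by omega) :=
        hFsuf' m hma (by omega)
      have eqm1 : F (m + 1) = P[c + 1 + (m - (a + L)) + 1]'hb1 := by
        rw [hFsuf' (m+1) (by omega) hm]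
        exact getElem_idx_congr _ (by omega) hb1
      rw [eqm, eqm1]
      exact hPchain _ hb1
  -- temporal path structure for P2
  have hP2ne : P2 ≠ [] := by
    apply List.ne_nil_of_length_pos
    rw [hP2len]; omega
  have hP2mem : ∀ f ∈ P2, f ∈ inducedTG trips τ := by
    intro f hf
    obtain ⟨m, hm, rfl⟩ := List.mem_iff_getElem.mp hf
    have hm' : m < len' := by rwa [hP2len] at hm
    simp only [hP2def, List.getElem_map, List.getElem_range]
    by_cases h1 : m < a
    · rw [hFpre m h1]; exact hmemG _ (List.getElem_mem _)
    by_cases h2 : m < a + L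
    · rw [hFseg' m (by omega) h2]
      refine ⟨⟨g a, hi⟩, ?_⟩
      rw [← hTdef, ← htdef]
      exact List.getElem_mem _
    · rw [hFsuf' m (by omega) hm']
      exact hmemG _ (List.getElem_mem _)
  have hP2chain : P2.Chain' fun e f => e.head = f.tail ∧ e.time + e.travel ≤ f.time := by
    refine List.isChain_iff_getElem.mpr ?_
    intro m hm
    have hm' : m + 1 < len' := by
      rw [hP2len] at hm; omega
    simp only [List.get_eq_getElem, hP2def, List.getElem_map, List.getElem_range]
    exact hstepF m hm'
  have hP2head : P2.head?.map TEdge.tail = some u := by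
    have h0 : 0 < P2.length := by rw [hP2len]; omega
    rw [List.head?_eq_getElem?, List.getElem?_eq_getElem h0]
    simp only [hP2def, List.getElem_map, List.getElem_range, Option.map_some]
    by_cases h0a : 0 < a
    · rw [hFpre 0 h0a, hu]
    · have e := hFseg' 0 (by omega) (by omega)
      rw [e]
      have e2 : (tripTEdges T t)[j + (0 - a)]'(by omega) = P[a]'ha := by
        rw [← hgetA]
        exact getElem_idx_congr _ (by omega) hjTE
      rw [e2]
      have e3 : P[a]'ha = P[0]'hnpos := getElem_idx_congr _ (by omega) hnpos
      rw [e3, hu]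
  have hP2last : P2.getLast?.map TEdge.head = some v := by
    have hl : P2.length - 1 < P2.length := by rw [hP2len]; omega
    rw [List.getLast?_eq_getElem?, List.getElem?_eq_getElem hl]
    have hl' : P2.length - 1 = len' - 1 := by rw [hP2len]
    simp only [hP2def, List.getElem_map, List.getElem_range, Option.map_some]
    by_cases hcn : c + 1 < n
    · have e := hFsuf' (P2.length - 1) (by rw [hP2len]; omega) (by rw [hP2len]; omega)
      rw [e]
      have e2 : P[c + 1 + (P2.length - 1 - (a + L))]'(by rw [hP2len]; omega)
          = P[n-1]'(by omega) := getElem_idx_congr _ (by rw [hP2len]; omega) (by omega)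
      rw [e2, hv]
    · have e := hFseg' (P2.length - 1) (by rw [hP2len]; omega) (by rw [hP2len]; omega)
      rw [e]
      have e2 : (tripTEdges T t)[j + (P2.length - 1 - a)]'(by rw [hP2len]; omega)
          = P[c]'hc := by
        rw [← hgetC]
        exact getElem_idx_congr _ (by rw [hP2len]; omega) hj'TE
      rw [e2]
      have e3 : P[c]'hc = P[n-1]'(by omega) := getElem_idx_congr _ (by omega) (by omega)
      rw [e3, hv]
  -- new trip assignment
  set g2 : ℕ → ℕ := fun m =>
    if m < a then g m else if m < a + L then g a else g (c + 1 + (m - (a + L))) with hg2def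
  have hInd2 : ∀ m, ∀ hm : m < P2.length, InducedBy trips τ (g2 m) (P2.get ⟨m, hm⟩) := by
    intro m hm
    have hm' : m < len' := by rwa [hP2len] at hm
    simp only [List.get_eq_getElem, hP2def, List.getElem_map, List.getElem_range, hg2def]
    by_cases h1 : m < a
    · rw [if_pos h1, hFpre m h1]
      have := hInd m (by omega)
      simpa [List.get_eq_getElem] using this
    by_cases h2 : m < a + L
    · rw [if_neg h1, if_pos h2, hFseg' m (by omega) h2]
      refine ⟨hi, ?_⟩
      rw [← hTdef, ← htdef]
      exact List.getElem_mem _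
    · rw [if_neg h1, if_neg h2, hFsuf' m (by omega) hm']
      have := hInd (c + 1 + (m - (a + L))) (by omega)
      simpa [List.get_eq_getElem] using this
  have hsub : (Finset.range P2.length).image g2 ⊆ (Finset.range n).image g := by
    intro x hx
    simp only [Finset.mem_image, Finset.mem_range] at hx ⊢
    obtain ⟨m, hm, rfl⟩ := hx
    rw [hP2len] at hm
    simp only [hg2def]
    by_cases h1 : m < a
    · rw [if_pos h1]; exact ⟨m, by omega, rfl⟩
    by_cases h2 : m < a + L
    · rw [if_neg h1, if_pos h2]; exact ⟨a, by omega, rfl⟩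
    · rw [if_neg h1, if_neg h2]; exact ⟨c + 1 + (m - (a + L)), by omega, rfl⟩
  -- the boundary count decreases
  have hvals : (List.range n).map g =
      (List.range a).map g ++ (List.range (c + 1 - a)).map (fun m => g (a + m))
        ++ (List.range (n - (c + 1))).map (fun m => g (c + 1 + m)) := by
    apply List.ext_getElem
    · simp; omega
    · intro m h1 h2
      simp only [List.getElem_map, List.getElem_range, List.getElem_append,
        List.length_append, List.length_map, List.length_range]
      split_ifs with ha1 ha2 <;> [skip; skip; skip] <;> (congr 1 <;> omega)
  have hvals2 : (List.range len').map g2 =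
      (List.range a).map g ++ List.replicate L (g a)
        ++ (List.range (n - (c + 1))).map (fun m => g (c + 1 + m)) := by
    apply List.ext_getElem
    · simp; omega
    · intro m h1 h2
      simp only [List.getElem_map, List.getElem_range, List.getElem_append,
        List.length_append, List.length_map, List.length_range, List.length_replicate,
        List.getElem_replicate, hg2def]
      split_ifs <;> first | rfl | (congr 1 <;> omega) | omega
  have hMid0 : ((List.range (c + 1 - a)).map (fun m => g (a + m))).head? = some (g a) := by
    rw [List.head?_eq_getElem?, List.getElem?_eq_getElem (by simp; omega)]
    simp
  have hMidLast : ((List.range (c + 1 - a)).map (fun m => g (a + m))).getLast? = some (g a) := by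
    rw [List.getLast?_eq_getElem?, List.getElem?_eq_getElem (by simp; omega)]
    simp only [List.getElem_map, List.getElem_range, List.length_map, List.length_range,
      Option.some.injEq]
    rw [hac]
    congr 1
    omega
  have hMidMem : g b ∈ (List.range (c + 1 - a)).map (fun m => g (a + m)) := by
    refine List.mem_map.mpr ⟨b - a, List.mem_range.mpr (by omega), ?_⟩
    congr 1
    omega
  have hMI := bnd_surgery ((List.range a).map g)
      ((List.range (n - (c + 1))).map (fun m => g (c + 1 + m)))
      ((List.range (c + 1 - a)).map (fun m => g (a + m))) (g a)
      hMid0 hMidLast (g b) hMidMem hba L (by omega)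
  rw [← hvals, ← hvals2] at hMI
  have hlt : bnd ((List.range P2.length).map g2) < N := by
    rw [hP2len]
    omega
  obtain ⟨P3, g3, h1, h2, h3, h4⟩ := IH _ hlt P2 g2
    ⟨hP2ne, hP2mem, hP2chain, hP2head, hP2last⟩ hInd2 le_rfl
  exact ⟨P3, g3, h1, h2, h3.trans hsub, h4⟩

end TripConsec

/-- If there is a temporal path from `u` to `v` using at most `k`
distinct trips, then there is one using at most `k` distinct trips in which the
edges induced by each trip occur consecutively. -/
theorem temporal_path_trips_consecutive
    {V : Type} (trips : List (List (DEdge V))) (hN : IsTripNetwork trips)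
    (τ : ℕ → ℝ) (u v : V) (k : ℕ)
    (h : ∃ (P : List (TEdge V)) (g : ℕ → ℕ),
        IsTemporalPath (inducedTG trips τ) P u v ∧
        (∀ (a : ℕ) (ha : a < P.length), InducedBy trips τ (g a) (P.get ⟨a, ha⟩)) ∧
        ((Finset.range P.length).image g).card ≤ k) :
    ∃ (P : List (TEdge V)) (g : ℕ → ℕ),
      IsTemporalPath (inducedTG trips τ) P u v ∧
      (∀ (a : ℕ) (ha : a < P.length), InducedBy trips τ (g a) (P.get ⟨a, ha⟩)) ∧
      ((Finset.range P.length).image g).card ≤ k ∧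
      ∀ (a b c : ℕ), a ≤ b → b ≤ c → c < P.length → g a = g c → g b = g a := by
  obtain ⟨P, g, hP, hInd, hcard⟩ := h
  obtain ⟨P', g', h1, h2, h3, h4⟩ := TripConsec.key trips hN τ u v
    (TripConsec.bnd ((List.range P.length).map g)) P g hP hInd le_rfl
  exact ⟨P', g', h1, h2, le_trans (Finset.card_le_card h3) hcard, h4⟩
end

section
/- Let (D,𝕋) be a trip network with induced multidigraph M (the disjoint union of the trips, each edge labeled by the trip it belongs to), let s and t be nodes, and let k≥1. Then there exists a temporalisation τ of (D,𝕋) such that t is (k,τ)-reachable from s if and only if M contains a walk from s to t that is the concatenation of at most k nonempty subtrips of pairwise distinct trips of 𝕋, where a subtrip of a trip T is a sequence of consecutive edges of T. -/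
/-- `t` is `(k,τ)`-reachable from `s`: `t = s` or there is a temporal path from
`s` to `t` composed of temporal edges induced by at most `k` distinct trips. -/
def KReach {V : Type} (trips : List (List (DEdge V))) (τ : ℕ → ℝ) (k : ℕ)
    (s t : V) : Prop :=
  s = t ∨ ∃ (P : List (TEdge V)) (I : Finset ℕ),
    IsTemporalPath (inducedTG trips τ) P s t ∧ I.card ≤ k ∧
    ∀ f ∈ P, ∃ i ∈ I, InducedBy trips τ i f

/-- A (possibly empty) walk from `s` to `t`. -/
def IsWalkFromTo {V : Type} (W : List (DEdge V)) (s t : V) : Prop :=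
  (W.Chain' fun e f => e.head = f.tail) ∧
  ((W = [] ∧ s = t) ∨ (W.head?.map DEdge.tail = some s ∧ W.getLast?.map DEdge.head = some t))

namespace Aux
variable {V : Type}

def off (S : List (DEdge V)) (n : ℕ) : ℝ := ((S.take n).map DEdge.weight).sum

@[simp] lemma off_zero (S : List (DEdge V)) : off S 0 = 0 := rfl

lemma off_succ (S : List (DEdge V)) (n : ℕ) (h : n < S.length) :
    off S (n+1) = off S n + S[n].weight := by
  unfold off
  rw [List.map_take, List.map_take, List.sum_take_succ _ n (by simpa using h)]
  simp

lemma off_cons (e : DEdge V) (S : List (DEdge V)) (n : ℕ) :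
    off (e :: S) (n+1) = e.weight + off S n := by
  simp [off]

lemma mem_tripTEdges {S : List (DEdge V)} {t : ℝ} {f : TEdge V} :
    f ∈ tripTEdges S t ↔ ∃ n, ∃ h : n < S.length,
      f = ⟨S[n].tail, S[n].head, t + off S n, S[n].weight⟩ := by
  induction S generalizing t with
  | nil => simp [tripTEdges]
  | cons e es ih =>
    simp only [tripTEdges, List.mem_cons, ih]
    constructor
    · rintro (rfl | ⟨n, h, rfl⟩)
      · exact ⟨0, by simp, by simp⟩
      · exact ⟨n+1, by simpa using h, by simp [off_cons]; ring_nf⟩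
    · rintro ⟨n, h, rfl⟩
      match n with
      | 0 => left; simp
      | (m+1) =>
        right; exact ⟨m, by simpa using h, by simp [off_cons]; ring_nf⟩

lemma off_lt_off {S : List (DEdge V)} (hpos : ∀ e ∈ S, 0 < e.weight)
    {m n : ℕ} (hmn : m < n) (hn : n ≤ S.length) : off S m < off S n := by
  induction n with
  | zero => omega
  | succ k ih =>
    have hk : k < S.length := by omega
    rw [off_succ S k hk]
    rcases Nat.lt_or_ge m k with h | h
    · exact lt_trans (ih h (by omega)) (by
        have := hpos S[k] (List.getElem_mem hk); linarith)
    · have : m = k := by omega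
      subst this
      have := hpos S[m] (List.getElem_mem hk); linarith

lemma off_le_off_iff {S : List (DEdge V)} (hpos : ∀ e ∈ S, 0 < e.weight)
    {m n : ℕ} (hm : m ≤ S.length) (hn : n ≤ S.length) :
    off S m ≤ off S n ↔ m ≤ n := by
  constructor
  · intro h
    by_contra hc
    have := off_lt_off hpos (show n < m by omega) hm
    linarith
  · intro h
    rcases Nat.lt_or_ge m n with h' | h'
    · exact le_of_lt (off_lt_off hpos h' hn)
    · have : m = n := by omega
      simp [this]

lemma tripTEdges_append (a b : List (DEdge V)) (t : ℝ) :
    tripTEdges (a ++ b) t = tripTEdges a t ++ tripTEdges b (t + tripDuration a) := by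
  induction a generalizing t with
  | nil => simp [tripTEdges, tripDuration]
  | cons e es ih =>
    simp [tripTEdges, ih, tripDuration]
    ring_nf


def TRel {V : Type} (e f : TEdge V) : Prop := e.head = f.tail ∧ e.time + e.travel ≤ f.time

lemma tripTEdges_ne_nil {S : List (DEdge V)} (hS : S ≠ []) (t : ℝ) :
    tripTEdges S t ≠ [] := by
  cases S with
  | nil => simp at hS
  | cons e es => simp [tripTEdges]

lemma tripTEdges_head? {S : List (DEdge V)} (t : ℝ) :
    (tripTEdges S t).head?.map TEdge.tail = S.head?.map DEdge.tail := by
  cases S <;> simp [tripTEdges]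

lemma tripTEdges_head?_time {S : List (DEdge V)} (t : ℝ) :
    (tripTEdges S t).head?.map TEdge.time = S.head?.map (fun _ => t) := by
  cases S <;> simp [tripTEdges]

lemma tripTEdges_getLast? {S : List (DEdge V)} (t : ℝ) :
    (tripTEdges S t).getLast?.map TEdge.head = S.getLast?.map DEdge.head := by
  induction S generalizing t with
  | nil => simp [tripTEdges]
  | cons e es ih =>
    cases es with
    | nil => simp [tripTEdges]
    | cons e' es' =>
      rw [List.getLast?_cons_cons]
      have : tripTEdges (e :: e' :: es') t
          = ⟨e.tail, e.head, t, e.weight⟩ :: ⟨e'.tail, e'.head, t + e.weight, e'.weight⟩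
            :: tripTEdges es' (t + e.weight + e'.weight) := rfl
      rw [this, List.getLast?_cons_cons]
      exact ih _

lemma tripTEdges_getLast?_endtime {S : List (DEdge V)} (t : ℝ) {f : TEdge V}
    (h : (tripTEdges S t).getLast? = some f) :
    f.time + f.travel = t + tripDuration S := by
  induction S generalizing t with
  | nil => simp [tripTEdges] at h
  | cons e es ih =>
    cases es with
    | nil =>
      simp [tripTEdges] at h
      subst h
      simp [tripDuration]
    | cons e' es' =>
      have heq : tripTEdges (e :: e' :: es') t
          = ⟨e.tail, e.head, t, e.weight⟩ :: ⟨e'.tail, e'.head, t + e.weight, e'.weight⟩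
            :: tripTEdges es' (t + e.weight + e'.weight) := rfl
      rw [heq, List.getLast?_cons_cons] at h
      have := ih _ h
      rw [this]
      simp [tripDuration]
      ring

lemma tripTEdges_chain' {S : List (DEdge V)} (hS : S.Chain' fun e f => e.head = f.tail) (t : ℝ) :
    (tripTEdges S t).Chain' TRel := by
  induction S generalizing t with
  | nil => simp [tripTEdges]; exact List.isChain_nil
  | cons e es ih =>
    cases es with
    | nil => simp [tripTEdges]; exact List.isChain_singleton _
    | cons e' es' =>
      have hS' := (List.isChain_cons_cons.mp hS)
      refine List.isChain_cons_cons.mpr ⟨⟨hS'.1, by simp⟩, ih hS'.2 _⟩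



lemma head?_append_left {α : Type*} (l l' : List α) (h : l ≠ []) :
    (l ++ l').head? = l.head? := by
  cases l with
  | nil => simp at h
  | cons a l => simp

lemma getLast?_append_right {α : Type*} (l l' : List α) (h : l' ≠ []) :
    (l ++ l').getLast? = l'.getLast? := by
  rw [List.getLast?_append]
  obtain ⟨a, ha⟩ := Option.isSome_iff_exists.mp (List.getLast?_isSome.mpr h)
  simp [ha]

lemma times_mono {P : List (TEdge V)} (hc : P.Chain' TRel)
    (hpos : ∀ f ∈ P, 0 < f.travel) :
    ∀ (p q : ℕ) (hq : q < P.length) (hpq : p < q),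
      (P[p]'(by omega)).time + (P[p]'(by omega)).travel ≤ P[q].time := by
  induction P with
  | nil => intro p q hq h; simp at hq
  | cons f P' ih =>
    intro p q hq hpq
    match p, q with
    | 0, (q'+1) =>
      have hq' : q' < P'.length := by simpa using hq
      cases P' with
      | nil => simp at hq'
      | cons g P'' =>
        have hrel : TRel f g := (List.isChain_cons_cons.mp hc).1
        have htail : List.Chain' TRel (g :: P'') := (List.isChain_cons_cons.mp hc).2
        simp only [List.getElem_cons_zero, List.getElem_cons_succ]
        rcases Nat.eq_zero_or_pos q' with h0 | h0
        · subst h0; simpa using hrel.2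
        · have h2 := ih htail (fun x hx => hpos x (List.mem_cons_of_mem _ hx)) 0 q' hq' h0
          have hg : 0 < g.travel := hpos g (by simp)
          simp only [List.getElem_cons_zero] at h2
          have := hrel.2
          linarith
    | (p'+1), (q'+1) =>
      have hq' : q' < P'.length := by simpa using hq
      simp only [List.getElem_cons_succ]
      exact ih hc.tail (fun x hx => hpos x (List.mem_cons_of_mem _ hx)) p' q' hq' (by omega)

lemma walk_append {W1 W2 : List (DEdge V)} {u v w : V}
    (h1 : IsWalkFromTo W1 u v) (h2 : IsWalkFromTo W2 v w) :
    IsWalkFromTo (W1 ++ W2) u w := by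
  obtain ⟨hc1, hd1⟩ := h1
  obtain ⟨hc2, hd2⟩ := h2
  rcases hd1 with ⟨rfl, rfl⟩ | ⟨hh1, hl1⟩
  · rw [List.nil_append]; exact ⟨hc2, hd2⟩
  · rcases hd2 with ⟨rfl, rfl⟩ | ⟨hh2, hl2⟩
    · rw [List.append_nil]; exact ⟨hc1, Or.inr ⟨hh1, hl1⟩⟩
    · have hW1 : W1 ≠ [] := by rintro rfl; simp at hh1
      have hW2 : W2 ≠ [] := by rintro rfl; simp at hh2
      refine ⟨?_, Or.inr ⟨?_, ?_⟩⟩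
      · show List.IsChain _ (_ ++ _)
        rw [List.isChain_append]
        refine ⟨hc1, hc2, ?_⟩
        intro x hx y hy
        have hx' : x.head = v := by
          rw [hx] at hl1; simpa using hl1
        have hy' : y.tail = v := by
          rw [hy] at hh2; simpa using hh2
        rw [hx', hy']
      · rw [head?_append_left _ _ hW1]; exact hh1
      · rw [getLast?_append_right _ _ hW2]; exact hl2

lemma walk_split {W1 W2 : List (DEdge V)} {u w : V} (h : IsWalkFromTo (W1 ++ W2) u w)
    (h1 : W1 ≠ []) (h2 : W2 ≠ []) :
    ∃ v, IsWalkFromTo W1 u v ∧ IsWalkFromTo W2 v w := by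
  obtain ⟨hc, hd⟩ := h
  rcases hd with ⟨habs, _⟩ | ⟨hh, hl⟩
  · exact absurd habs (by simp [h1])
  change List.IsChain _ (_ ++ _) at hc
  rw [List.isChain_append] at hc
  obtain ⟨hc1, hc2, hlink⟩ := hc
  obtain ⟨x, hx⟩ := Option.isSome_iff_exists.mp (List.getLast?_isSome.mpr h1)
  obtain ⟨y, hy⟩ := Option.isSome_iff_exists.mp (List.isSome_head?.mpr h2)
  refine ⟨y.tail, ⟨hc1, Or.inr ⟨?_, ?_⟩⟩, ⟨hc2, Or.inr ⟨?_, ?_⟩⟩⟩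
  · rw [head?_append_left _ _ h1] at hh; exact hh
  · rw [hx]; simp [hlink x hx y hy]
  · rw [hy]; rfl
  · rw [getLast?_append_right _ _ h2] at hl; exact hl

lemma fwd_core (trips : List (List (DEdge V)))
    (hpos : ∀ T ∈ trips, ∀ e ∈ T, 0 < e.weight)
    (hwalkT : ∀ T ∈ trips, T.Chain' fun e f => e.head = f.tail)
    (τ : ℕ → ℝ) (t : V) :
    ∀ (N : ℕ) (P : List (TEdge V)) (ι : ℕ → ℕ) (u : V),
      P.length ≤ N → P ≠ [] →
      P.Chain' TRel →
      P.head?.map TEdge.tail = some u →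
      P.getLast?.map TEdge.head = some t →
      (∀ m, ∀ hm : m < P.length, InducedBy trips τ (ι m) P[m]) →
      ∃ L : List (ℕ × List (DEdge V)),
        (L.map Prod.fst).Nodup ∧
        (∀ p ∈ L, ∃ m, ∃ _ : m < P.length, p.1 = ι m) ∧
        (∀ p ∈ L, p.2 ≠ [] ∧ ∃ h : p.1 < trips.length, p.2 <:+: trips.get ⟨p.1, h⟩) ∧
        IsWalkFromTo ((L.map Prod.snd).flatten) u t ∧ L ≠ [] := by
  intro N
  induction N with
  | zero =>
    intro P ι u hlen hne
    exact absurd (List.length_pos_iff.mpr hne) (by omega)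
  | succ N ih =>
    intro P ι u hlen hne hch hhd hlast hind
    have hP0 : 0 < P.length := List.length_pos_iff.mpr hne
    set i := ι 0 with hidef
    -- positivity of travels
    have hPtravel : ∀ f ∈ P, 0 < f.travel := by
      intro f hf
      obtain ⟨m, hm, rfl⟩ := List.mem_iff_getElem.mp hf
      obtain ⟨hlt, hmem⟩ := hind m hm
      obtain ⟨n, hn, heq⟩ := mem_tripTEdges.mp hmem
      rw [heq]
      exact hpos _ (trips.get_mem _) _ (List.getElem_mem hn)
    -- the last index of the path using trip i
    have hQne : ((Finset.range P.length).filter (fun m => ι m = i)).Nonempty :=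
      ⟨0, by simp [Finset.mem_filter, hP0, hidef]⟩
    obtain ⟨q, hqmem, hqtop⟩ :
        ∃ q ∈ (Finset.range P.length).filter (fun m => ι m = i),
          ∀ m ∈ (Finset.range P.length).filter (fun m => ι m = i), m ≤ q :=
      ⟨_, Finset.max'_mem _ hQne, fun m hm => Finset.le_max' _ m hm⟩
    rw [Finset.mem_filter, Finset.mem_range] at hqmem
    obtain ⟨hqlt, hqi⟩ := hqmem
    have hqmax : ∀ m, q < m → m < P.length → ι m ≠ i := by
      intro m h1 h2 hceq
      have := hqtop m (by simp [Finset.mem_filter, h2, hceq])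
      omega
    -- extract trip edge indices for positions 0 and q
    obtain ⟨hilt, hmem0⟩ := hind 0 hP0
    obtain ⟨hilt', hmemq⟩ := hind q hqlt
    have hmemq' : P[q] ∈ tripTEdges (trips.get ⟨i, hilt⟩) (τ i) := by
      have hfin : (⟨ι q, hilt'⟩ : Fin trips.length) = ⟨i, hilt⟩ := Fin.ext hqi
      rw [← hfin, ← hqi]
      exact hmemq
    set T := trips.get ⟨i, hilt⟩ with hTdef
    have hTin : T ∈ trips := trips.get_mem _
    have hTpos : ∀ e ∈ T, 0 < e.weight := hpos T hTin
    have hTch := hwalkT T hTin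
    obtain ⟨n₀, hn₀, heq0⟩ := mem_tripTEdges.mp hmem0
    obtain ⟨nq, hnq, heqq⟩ := mem_tripTEdges.mp hmemq'
    -- n₀ ≤ nq
    have htime0 : P[0].time = τ i + off T n₀ := by rw [heq0]
    have htimeq : P[q].time = τ i + off T nq := by rw [heqq]
    have hle : n₀ ≤ nq := by
      have hoff : off T n₀ ≤ off T nq := by
        rcases Nat.eq_zero_or_pos q with h0 | h0
        · subst h0
          rw [htime0] at htimeq
          linarith
        · have hmono := times_mono hch hPtravel 0 q hqlt h0
          have hmono' : P[0].time + P[0].travel ≤ P[q].time := hmono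
          have htr : (0:ℝ) < P[0].travel := hPtravel P[0] (List.getElem_mem hP0)
          rw [htime0, htimeq] at hmono'
          linarith
      exact (off_le_off_iff hTpos (le_of_lt hn₀) (le_of_lt hnq)).mp hoff
    -- the block
    set block : List (DEdge V) := (T.drop n₀).take (nq + 1 - n₀) with hblockdef
    have hblen : block.length = nq + 1 - n₀ := by
      simp [hblockdef]; omega
    have hbne : block ≠ [] := by
      rw [← List.length_pos_iff, hblen]; omega
    have hbinf : block <:+: T :=
      (List.take_prefix _ _).isInfix.trans (List.drop_suffix _ _).isInfix
    have hbget : ∀ (j : ℕ) (hj : j < block.length), block[j] = T[n₀ + j]'(by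
        rw [hblen] at hj; omega) := by
      intro j hj
      have h1 : block[j] = ((T.drop n₀).take (nq + 1 - n₀))[j]'(by
        rw [← hblockdef]; exact hj) := rfl
      rw [h1, List.getElem_take, List.getElem_drop]
    have hu : P[0].tail = u := by
      rw [List.head?_eq_getElem?, List.getElem?_eq_getElem hP0] at hhd
      simpa using hhd
    set v := P[q].head with hvdef
    -- the block is a walk from u to v
    have hbwalk : IsWalkFromTo block u v := by
      refine ⟨hTch.infix hbinf, Or.inr ⟨?_, ?_⟩⟩
      · rw [List.head?_eq_getElem?, List.getElem?_eq_getElem (by rw [hblen]; omega : 0 < block.length)]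
        have := hbget 0 (by rw [hblen]; omega)
        rw [Option.map_some]
        congr 1
        rw [this]
        simp only [Nat.add_zero]
        rw [← hu, heq0]
      · have hjlt : block.length - 1 < block.length := by omega
        rw [List.getLast?_eq_getElem?, List.getElem?_eq_getElem hjlt, Option.map_some]
        congr 1
        rw [hbget _ hjlt]
        have hidx : n₀ + (block.length - 1) = nq := by omega
        rw [hvdef, heqq]
        simp only [hidx]
    -- case split on whether q is the last position
    rcases Nat.lt_or_ge (q+1) P.length with hqlast | hqlast
    · -- recurse on the remainder
      set P' := P.drop (q+1) with hP'def
      have hP'len : P'.length = P.length - (q+1) := by simp [hP'def]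
      have hP'ne : P' ≠ [] := by
        rw [← List.length_pos_iff, hP'len]; omega
      have hch' : P'.Chain' TRel := hch.infix (List.drop_suffix _ _).isInfix
      have hget' : ∀ (m : ℕ) (hm : m < P'.length), P'[m] = P[q+1+m]'(by rw [hP'len] at hm; omega) := by
        intro m hm
        have h1 : P'[m] = (P.drop (q+1))[m]'(by rw [← hP'def]; exact hm) := rfl
        rw [h1, List.getElem_drop]
      have hrel : TRel P[q] (P[q+1]'hqlast) := by
        have := List.isChain_iff_getElem.mp hch q (by omega)
        simpa using this
      have hhd' : P'.head?.map TEdge.tail = some v := by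
        rw [List.head?_eq_getElem?, List.getElem?_eq_getElem (by rw [hP'len]; omega : 0 < P'.length)]
        rw [Option.map_some]
        congr 1
        rw [hget' 0 (by rw [hP'len]; omega)]
        simp only [Nat.add_zero]
        exact hrel.1.symm
      have hlast' : P'.getLast?.map TEdge.head = some t := by
        have : P = P.take (q+1) ++ P' := (List.take_append_drop _ _).symm
        rw [this, getLast?_append_right _ _ hP'ne] at hlast
        exact hlast
      have hind' : ∀ m, ∀ hm : m < P'.length, InducedBy trips τ ((fun m => ι (q+1+m)) m) P'[m] := by
        intro m hm
        rw [hget' m hm]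
        exact hind (q+1+m) _
      obtain ⟨L', hnd', hidx', hsub', hwalk', hne'⟩ :=
        ih P' (fun m => ι (q+1+m)) v (by rw [hP'len]; omega) hP'ne hch' hhd' hlast' hind'
      refine ⟨(i, block) :: L', ?_, ?_, ?_, ?_, by simp⟩
      · rw [List.map_cons, List.nodup_cons]
        refine ⟨?_, hnd'⟩
        intro hmem
        obtain ⟨p, hp, hp1⟩ := List.mem_map.mp hmem
        obtain ⟨m, hm, hpeq⟩ := hidx' p hp
        rw [hP'len] at hm
        exact hqmax (q+1+m) (by omega) (by omega) (by rw [← hpeq, hp1])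
      · intro p hp0
        rcases List.mem_cons.mp hp0 with rfl | hp
        · exact ⟨0, hP0, rfl⟩
        · obtain ⟨m, hm, hpeq⟩ := hidx' p hp
          rw [hP'len] at hm
          exact ⟨q+1+m, by omega, hpeq⟩
      · intro p hp0
        rcases List.mem_cons.mp hp0 with rfl | hp
        · exact ⟨hbne, hilt, hbinf⟩
        · exact hsub' p hp
      · rw [List.map_cons, List.flatten_cons]
        exact walk_append hbwalk hwalk'
    · -- q is the last position
      have hq1 : q = P.length - 1 := by omega
      have hvt : v = t := by
        rw [List.getLast?_eq_getElem?, List.getElem?_eq_getElem (by omega : P.length - 1 < P.length)] at hlast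
        rw [hvdef]
        have : P[q] = P[P.length - 1]'(by omega) := by congr 1
        rw [this]
        simpa using hlast
      refine ⟨[(i, block)], by simp, ?_, ?_, ?_, by simp⟩
      · intro p hp0
        rcases List.mem_cons.mp hp0 with rfl | hp
        · exact ⟨0, hP0, rfl⟩
        · simp at hp
      · intro p hp0
        rcases List.mem_cons.mp hp0 with rfl | hp
        · exact ⟨hbne, hilt, hbinf⟩
        · simp at hp
      · simp only [List.map_cons, List.map_nil, List.flatten_cons, List.flatten_nil, List.append_nil]
        rw [← hvt]
        exact hbwalk

/-- Concatenated temporal edges of a list of blocks, back to back. -/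
def chainTE : List (ℕ × List (DEdge V)) → ℝ → List (TEdge V)
  | [], _ => []
  | (_, S) :: L', b => tripTEdges S b ++ chainTE L' (b + tripDuration S)

/-- Alignment of a temporalisation with a list of blocks starting at time `b`. -/
def Aligned (trips : List (List (DEdge V))) (τ : ℕ → ℝ) :
    List (ℕ × List (DEdge V)) → ℝ → Prop
  | [], _ => True
  | (i, S) :: L', b =>
      (∃ (h : i < trips.length) (pre suf : List (DEdge V)),
        trips.get ⟨i, h⟩ = pre ++ S ++ suf ∧ τ i + tripDuration pre = b) ∧
      Aligned trips τ L' (b + tripDuration S)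

lemma bwd_core (trips : List (List (DEdge V))) (τ : ℕ → ℝ) (t : V) :
    ∀ (L : List (ℕ × List (DEdge V))) (b : ℝ) (u : V),
      L ≠ [] →
      (∀ p ∈ L, p.2 ≠ [] ∧ (p.2.Chain' fun e f => e.head = f.tail) ∧ ∀ e ∈ p.2, 0 < e.weight) →
      Aligned trips τ L b →
      IsWalkFromTo ((L.map Prod.snd).flatten) u t →
      ∃ P : List (TEdge V),
        P ≠ [] ∧
        (P.Chain' TRel) ∧
        P.head?.map TEdge.tail = some u ∧
        P.getLast?.map TEdge.head = some t ∧
        P.head?.map TEdge.time = some b ∧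
        (∀ f ∈ P, ∃ p ∈ L, InducedBy trips τ p.1 f) := by
  intro L
  induction L with
  | nil => intro b u h; exact absurd rfl h
  | cons p L' ih =>
    obtain ⟨i, S⟩ := p
    intro b u _ hprops hal hwalk
    obtain ⟨⟨hilt, pre, suf, htrip, htime⟩, hal'⟩ := hal
    obtain ⟨hSne, hSch, hSpos⟩ := hprops (i, S) (by simp)
    -- facts about this block's temporal edges
    set P₁ := tripTEdges S b with hP₁def
    have hP₁ne : P₁ ≠ [] := tripTEdges_ne_nil hSne b
    have hP₁ch : P₁.Chain' TRel := tripTEdges_chain' hSch b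
    have hP₁mem : ∀ f ∈ P₁, InducedBy trips τ i f := by
      intro f hf
      refine ⟨hilt, ?_⟩
      rw [htrip]
      simp only [tripTEdges_append, List.mem_append]
      rw [htime]
      first
      | exact Or.inl (Or.inr hf)
      | exact Or.inr (Or.inl hf)
    cases L' with
    | nil =>
      -- single block
      have hwalk1 : IsWalkFromTo S u t := by
        simpa using hwalk
      obtain ⟨hch1, hd1⟩ := hwalk1
      rcases hd1 with ⟨habs, _⟩ | ⟨hh1, hl1⟩
      · exact absurd habs hSne
      refine ⟨P₁, hP₁ne, hP₁ch, ?_, ?_, ?_, ?_⟩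
      · rw [hP₁def, tripTEdges_head?]; exact hh1
      · rw [hP₁def, tripTEdges_getLast?]; exact hl1
      · rw [hP₁def, tripTEdges_head?_time]
        cases S with
        | nil => exact absurd rfl hSne
        | cons e es => simp
      · intro f hf
        exact ⟨(i, S), by simp, hP₁mem f hf⟩
    | cons p' L'' =>
      -- more blocks
      have hRne : ((((p' :: L'').map Prod.snd)).flatten) ≠ [] := by
        obtain ⟨hne', _, _⟩ := hprops p' (by simp)
        cases hp' : p'.2 with
        | nil => exact absurd hp' hne'
        | cons e es =>
          simp only [List.map_cons, List.flatten_cons, hp']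
          simp
      have hflat : ((((i,S) :: p' :: L'').map Prod.snd)).flatten
          = S ++ (((p' :: L'').map Prod.snd)).flatten := by simp
      rw [hflat] at hwalk
      obtain ⟨v, hw1, hw2⟩ := walk_split hwalk hSne hRne
      obtain ⟨P₂, hP₂ne, hP₂ch, hP₂hd, hP₂last, hP₂time, hP₂mem⟩ :=
        ih (b + tripDuration S) v (by simp) (fun p hp => hprops p (by simp [hp]))
          hal' hw2
      obtain ⟨hch1, hd1⟩ := hw1
      rcases hd1 with ⟨habs, _⟩ | ⟨hh1, hl1⟩
      · exact absurd habs hSne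
      refine ⟨P₁ ++ P₂, by simp [hP₁ne], ?_, ?_, ?_, ?_, ?_⟩
      · show List.IsChain _ (_ ++ _)
        rw [List.isChain_append]
        refine ⟨hP₁ch, hP₂ch, ?_⟩
        intro x hx y hy
        have hx' : P₁.getLast? = some x := Option.mem_def.mp hx
        have hy' : P₂.head? = some y := Option.mem_def.mp hy
        have hxh : x.head = v := by
          have h2 := tripTEdges_getLast? (S := S) b
          rw [← hP₁def, hx', hl1] at h2
          simpa using h2
        have hyt : y.tail = v := by
          rw [hy'] at hP₂hd; simpa using hP₂hd
        have hxt : x.time + x.travel = b + tripDuration S :=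
          tripTEdges_getLast?_endtime b (hP₁def ▸ hx')
        have hyt2 : y.time = b + tripDuration S := by
          rw [hy'] at hP₂time; simpa using hP₂time
        exact ⟨by rw [hxh, hyt], by rw [hxt, hyt2]⟩
      · rw [head?_append_left _ _ hP₁ne, hP₁def, tripTEdges_head?]; exact hh1
      · rw [getLast?_append_right _ _ hP₂ne]; exact hP₂last
      · rw [head?_append_left _ _ hP₁ne, hP₁def, tripTEdges_head?_time]
        cases S with
        | nil => exact absurd rfl hSne
        | cons e es => simp
      · intro f hf
        rcases List.mem_append.mp hf with hf1 | hf2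
        · exact ⟨(i,S), by simp, hP₁mem f hf1⟩
        · obtain ⟨p, hp, hindp⟩ := hP₂mem f hf2
          exact ⟨p, by simp [hp], hindp⟩

lemma aligned_nil (trips : List (List (DEdge V))) (τ : ℕ → ℝ) (b : ℝ) :
    Aligned trips τ [] b := trivial

lemma aligned_cons (trips : List (List (DEdge V))) (τ : ℕ → ℝ) (i : ℕ)
    (S : List (DEdge V)) (L' : List (ℕ × List (DEdge V))) (b : ℝ) :
    Aligned trips τ ((i, S) :: L') b ↔
      ((∃ (h : i < trips.length) (pre suf : List (DEdge V)),
        trips.get ⟨i, h⟩ = pre ++ S ++ suf ∧ τ i + tripDuration pre = b) ∧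
      Aligned trips τ L' (b + tripDuration S)) := Iff.rfl

end Aux

theorem kReachable_iff_subtrip_walk'
    {V : Type} (trips : List (List (DEdge V))) (hN : IsTripNetwork trips)
    (s t : V) (k : ℕ) (hk : 1 ≤ k) :
    (∃ τ : ℕ → ℝ, KReach trips τ k s t) ↔
    (∃ L : List (ℕ × List (DEdge V)),
      L.length ≤ k ∧
      (L.map Prod.fst).Nodup ∧
      (∀ p ∈ L, p.2 ≠ [] ∧ ∃ h : p.1 < trips.length, p.2 <:+: trips.get ⟨p.1, h⟩) ∧
      IsWalkFromTo ((L.map Prod.snd).flatten) s t) := by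
  classical
  obtain ⟨htrips, -⟩ := hN
  have hpos : ∀ T ∈ trips, ∀ e ∈ T, 0 < e.weight := fun T hT => (htrips T hT).2
  have hwalkT : ∀ T ∈ trips, T.Chain' fun e f => e.head = f.tail :=
    fun T hT => (htrips T hT).1.2
  constructor
  · rintro ⟨τ, hkr⟩
    rcases hkr with rfl | ⟨P, I, hTP, hIcard, hcov⟩
    · exact ⟨[], by simp, by simp, by simp, ⟨List.isChain_nil, Or.inl ⟨rfl, rfl⟩⟩⟩
    · obtain ⟨hPne, hPG, hPch, hPhd, hPlast⟩ := hTP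
      have hchoice : ∀ (m : ℕ) (hm : m < P.length), ∃ i, i ∈ I ∧ InducedBy trips τ i P[m] := by
        intro m hm
        obtain ⟨i, hi, hind⟩ := hcov P[m] (List.getElem_mem hm)
        exact ⟨i, hi, hind⟩
      set ι : ℕ → ℕ := fun m =>
        if hm : m < P.length then Classical.choose (hchoice m hm) else 0 with hιdef
      have hι : ∀ (m : ℕ) (hm : m < P.length), ι m ∈ I ∧ InducedBy trips τ (ι m) P[m] := by
        intro m hm
        simp only [hιdef, dif_pos hm]
        exact Classical.choose_spec (hchoice m hm)
      obtain ⟨L, hnd, hidx, hsub, hwalk, -⟩ :=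
        Aux.fwd_core trips hpos hwalkT τ t P.length P ι s le_rfl hPne hPch hPhd hPlast
          (fun m hm => (hι m hm).2)
      refine ⟨L, ?_, hnd, hsub, hwalk⟩
      have hsubI : (L.map Prod.fst).toFinset ⊆ I := by
        intro x hx
        rw [List.mem_toFinset] at hx
        obtain ⟨p, hp, rfl⟩ := List.mem_map.mp hx
        obtain ⟨m, hm, hpeq⟩ := hidx p hp
        rw [hpeq]
        exact (hι m hm).1
      calc L.length = (L.map Prod.fst).length := by simp
        _ = (L.map Prod.fst).toFinset.card := (List.toFinset_card_of_nodup hnd).symm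
        _ ≤ I.card := Finset.card_le_card hsubI
        _ ≤ k := hIcard
  · rintro ⟨L, hlen, hnd, hsub, hwalk⟩
    by_cases hLnil : L = []
    · subst hLnil
      simp only [List.map_nil, List.flatten_nil] at hwalk
      obtain ⟨-, hd⟩ := hwalk
      rcases hd with ⟨-, rfl⟩ | ⟨hh, -⟩
      · exact ⟨fun _ => 0, Or.inl rfl⟩
      · simp at hh
    · -- construct the temporalisation
      have hExt : ∀ (j : ℕ) (hj : j < L.length),
          ∃ (h : L[j].1 < trips.length) (pre suf : List (DEdge V)),
            trips.get ⟨L[j].1, h⟩ = pre ++ L[j].2 ++ suf := by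
        intro j hj
        obtain ⟨-, h, hinf⟩ := hsub L[j] (List.getElem_mem hj)
        obtain ⟨pre, suf, heq⟩ := hinf
        exact ⟨h, pre, suf, heq.symm⟩
      set bt : ℕ → ℝ :=
        fun j => (((L.map fun p => tripDuration p.2).take j)).sum with hbtdef
      set pd : ℕ → ℝ := fun j =>
        if hj : j < L.length then tripDuration (hExt j hj).choose_spec.choose else 0
        with hpddef
      set τ : ℕ → ℝ := fun i =>
        bt ((L.map Prod.fst).idxOf i) - pd ((L.map Prod.fst).idxOf i) with hτdef
      have hτj : ∀ (j : ℕ) (hj : j < L.length), τ L[j].1 = bt j - pd j := by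
        intro j hj
        have h1 : (L.map Prod.fst)[j]'(by simpa using hj) = L[j].1 := by
          simp
        have h2 : (L.map Prod.fst).idxOf (L[j].1) = j := by
          rw [← h1]
          exact List.Nodup.idxOf_getElem (by exact hnd) j (by simpa using hj)
        rw [hτdef]
        simp only [h2]
      have hbt_succ : ∀ (j : ℕ) (hj : j < L.length),
          bt (j+1) = bt j + tripDuration L[j].2 := by
        intro j hj
        rw [hbtdef]
        simp only
        rw [List.sum_take_succ _ j (by simpa using hj)]
        congr 1
        simp
      have halign : ∀ (L' : List (ℕ × List (DEdge V))) (j : ℕ),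
          L.drop j = L' → Aux.Aligned trips τ L' (bt j) := by
        intro L'
        induction L' with
        | nil => intro j _; trivial
        | cons p L'' ihp =>
          intro j hdrop
          have hj : j < L.length := by
            by_contra hc
            rw [List.drop_eq_nil_of_le (by omega)] at hdrop
            simp at hdrop
          have hLj : L[j] = p := by
            have h0 := List.getElem?_drop (xs := L) (i := j) (j := 0)
            rw [hdrop] at h0
            simp only [Nat.add_zero] at h0
            rw [List.getElem?_eq_getElem hj] at h0
            simpa using h0.symm
          obtain ⟨i, S⟩ := p
          rw [Aux.aligned_cons]
          constructor
          · have h1 : L[j].1 = i := by rw [hLj]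
            have h2 : L[j].2 = S := by rw [hLj]
            rw [← h1, ← h2]
            obtain ⟨h, pre, suf, heq⟩ := hExt j hj
            refine ⟨(hExt j hj).choose, (hExt j hj).choose_spec.choose,
              (hExt j hj).choose_spec.choose_spec.choose,
              (hExt j hj).choose_spec.choose_spec.choose_spec, ?_⟩
            rw [hτj j hj, hpddef]
            simp only [dif_pos hj]
            ring
          · have hd' : L.drop (j+1) = L'' := by
              have : L.drop (j+1) = (L.drop j).tail := by
                rw [← List.drop_drop]
                simp [List.drop_one]
              rw [this, hdrop]
              rfl
            have := ihp (j+1) hd'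
            rw [hbt_succ j hj] at this
            have h2 : L[j].2 = S := by rw [hLj]
            rw [h2] at this
            exact this
      have hprops : ∀ p ∈ L, p.2 ≠ [] ∧ (p.2.Chain' fun e f => e.head = f.tail) ∧
          ∀ e ∈ p.2, 0 < e.weight := by
        intro p hp
        obtain ⟨hne, h, hinf⟩ := hsub p hp
        have hTin : trips.get ⟨p.1, h⟩ ∈ trips := trips.get_mem _
        refine ⟨hne, (hwalkT _ hTin).infix hinf, ?_⟩
        intro e he
        exact hpos _ hTin e (hinf.subset he)
      obtain ⟨P, hPne, hPch, hPhd, hPlast, -, hPmem⟩ :=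
        Aux.bwd_core trips τ t L (bt 0) s hLnil hprops (halign L 0 (by simp)) hwalk
      refine ⟨τ, Or.inr ⟨P, (L.map Prod.fst).toFinset, ⟨hPne, ?_, hPch, hPhd, hPlast⟩, ?_, ?_⟩⟩
      · intro f hf
        obtain ⟨p, hp, hlt, hmem⟩ := hPmem f hf
        exact ⟨⟨p.1, hlt⟩, hmem⟩
      · calc (L.map Prod.fst).toFinset.card = (L.map Prod.fst).length :=
              List.toFinset_card_of_nodup hnd
          _ = L.length := by simp
          _ ≤ k := hlen
      · intro f hf
        obtain ⟨p, hp, hip⟩ := hPmem f hf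
        exact ⟨p.1, by rw [List.mem_toFinset]; exact List.mem_map.mpr ⟨p, hp, rfl⟩, hip⟩

/-- There is a temporalisation making `t` `(k,τ)`-reachable from
`s` iff the induced multidigraph contains a walk from `s` to `t` which is the
concatenation of at most `k` nonempty subtrips of pairwise distinct trips. -/
theorem kReachable_iff_subtrip_walk
    {V : Type} (trips : List (List (DEdge V))) (hN : IsTripNetwork trips)
    (s t : V) (k : ℕ) (hk : 1 ≤ k) :
    (∃ τ : ℕ → ℝ, KReach trips τ k s t) ↔
    (∃ L : List (ℕ × List (DEdge V)),
      L.length ≤ k ∧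
      (L.map Prod.fst).Nodup ∧
      (∀ p ∈ L, p.2 ≠ [] ∧ ∃ h : p.1 < trips.length, p.2 <:+: trips.get ⟨p.1, h⟩) ∧
      IsWalkFromTo ((L.map Prod.snd).flatten) s t) :=
  kReachable_iff_subtrip_walk' trips hN s t k hk
end

section
/- Let (D,𝕋) be a trip network with n nodes containing nodes s and t, and let K∈ℕ. Construct (D',𝕋') by adding 2K new nodes y_1,…,y_K,z_1,…,z_K, adding the weight-1 edges (y_i,s) and (t,z_i) for i∈[K], and letting 𝕋' be 𝕋 together with one one-edge trip for each new edge. If (D,𝕋) is (s,t)-temporalisable, then there exists a temporalisation τ' of (D',𝕋') whose τ'-reachability is at least K². -/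
/-- Relabel the endpoints of an edge. -/
def liftEdge {V W : Type} (φ : V → W) (e : DEdge V) : DEdge W :=
  ⟨φ e.tail, φ e.head, e.weight⟩

/-- The extended trip network of the gap reduction for `MRTT`: `2K` new nodes
`y_1, …, y_K` (left) and `z_1, …, z_K` (right) are added, together with the
weight-1 edges `(y_i, s)` and `(t, z_i)` and the corresponding one-edge trips. -/
def extTrips {V : Type} (trips : List (List (DEdge V))) (K : ℕ) (s t : V) :
    List (List (DEdge (V ⊕ (Fin K ⊕ Fin K)))) :=
  trips.map (List.map (liftEdge Sum.inl))
    ++ ((List.finRange K).map fun i =>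
        [(⟨Sum.inr (Sum.inl i), Sum.inl s, 1⟩ : DEdge (V ⊕ (Fin K ⊕ Fin K)))])
    ++ ((List.finRange K).map fun i =>
        [(⟨Sum.inl t, Sum.inr (Sum.inr i), 1⟩ : DEdge (V ⊕ (Fin K ⊕ Fin K)))])



section Aux
variable {V W : Type}

def liftT (φ : V → W) (f : TEdge V) : TEdge W :=
  ⟨φ f.tail, φ f.head, f.time, f.travel⟩

lemma tripTEdges_map (φ : V → W) (T : List (DEdge V)) (t0 : ℝ) :
    tripTEdges (T.map (liftEdge φ)) t0 = (tripTEdges T t0).map (liftT φ) := by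
  induction T generalizing t0 with
  | nil => rfl
  | cons e es ih => simp [tripTEdges, liftEdge, liftT, ih]

lemma mem_inducedTG {trips : List (List (DEdge V))} {τ : ℕ → ℝ} {f : TEdge V}
    (i : ℕ) (h : i < trips.length) (hf : f ∈ tripTEdges trips[i] (τ i)) :
    f ∈ inducedTG trips τ := ⟨⟨i, h⟩, hf⟩

lemma extTrips_length (trips : List (List (DEdge V))) (K : ℕ) (s t : V) :
    (extTrips trips K s t).length = trips.length + (K + K) := by
  simp [extTrips]

lemma extTrips_get_left (trips : List (List (DEdge V))) (K : ℕ) (s t : V)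
    (i : ℕ) (h : i < trips.length) :
    (extTrips trips K s t)[i]'(by rw [extTrips_length]; omega)
      = trips[i].map (liftEdge Sum.inl) := by
  unfold extTrips
  rw [List.getElem_append_left (by simp; omega), List.getElem_append_left (by simpa using h),
    List.getElem_map]

lemma extTrips_get_y (trips : List (List (DEdge V))) (K : ℕ) (s t : V) (k : Fin K) :
    (extTrips trips K s t)[trips.length + k.1]'(by rw [extTrips_length]; omega)
      = [(⟨Sum.inr (Sum.inl k), Sum.inl s, 1⟩ : DEdge (V ⊕ (Fin K ⊕ Fin K)))] := by
  unfold extTrips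
  rw [List.getElem_append_left (by simp), List.getElem_append_right (by simp)]
  simp

lemma extTrips_get_z (trips : List (List (DEdge V))) (K : ℕ) (s t : V) (k : Fin K) :
    (extTrips trips K s t)[trips.length + K + k.1]'(by rw [extTrips_length]; omega)
      = [(⟨Sum.inl t, Sum.inr (Sum.inr k), 1⟩ : DEdge (V ⊕ (Fin K ⊕ Fin K)))] := by
  unfold extTrips
  rw [List.getElem_append_right (by simp)]
  simp

end Aux

/-- If `(D,𝕋)` is `(s,t)`-temporalisable then the extended trip
network admits a temporalisation of reachability at least `K²`. -/
theorem extended_reachability_of_temporalisable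
    {V : Type} [Fintype V] (trips : List (List (DEdge V)))
    (hN : IsTripNetwork trips) (s t : V) (K : ℕ)
    (h : Temporalisable trips s t) :
    ∃ τ' : ℕ → ℝ, K ^ 2 ≤ reachCount (inducedTG (extTrips trips K s t) τ') := by
  classical
  obtain ⟨τ, hst⟩ := h
  obtain ⟨A, B, hAB, hmid⟩ :
      ∃ A B : ℝ, A + 1 ≤ B ∧ (s = t ∨ ∃ p, IsTemporalPath (inducedTG trips τ) p s t ∧
        (∀ f ∈ p.head?, A + 1 ≤ f.time) ∧ (∀ f ∈ p.getLast?, f.time + f.travel ≤ B)) := by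
    rcases hst with rfl | ⟨p, hp⟩
    · exact ⟨0, 1, by norm_num, Or.inl rfl⟩
    · have hne := hp.1
      obtain ⟨f0, rest, rfl⟩ := List.exists_cons_of_ne_nil hne
      set fl := (f0 :: rest).getLast (by simp) with hfl
      refine ⟨f0.time - 1, max (f0.time) (fl.time + fl.travel), ?_, Or.inr ⟨_, hp, ?_, ?_⟩⟩
      · calc f0.time - 1 + 1 = f0.time := by ring
          _ ≤ _ := le_max_left _ _
      · intro f hf
        simp at hf
        subst hf
        linarith
      · intro f hf
        rw [List.getLast?_eq_getLast (l := f0 :: rest) (by simp)] at hf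
        simp at hf
        subst hf
        exact le_max_right _ _
  set τ' : ℕ → ℝ :=
    (fun n => if n < trips.length then τ n else if n < trips.length + K then A else B) with hτ'
  have hy : ∀ i : Fin K,
      (⟨Sum.inr (Sum.inl i), Sum.inl s, A, 1⟩ : TEdge (V ⊕ (Fin K ⊕ Fin K))) ∈
        inducedTG (extTrips trips K s t) τ' := by
    intro i
    refine mem_inducedTG (trips.length + i.1) (by rw [extTrips_length]; omega) ?_
    have h1 : τ' (trips.length + i.1) = A := by
      simp only [hτ']; rw [if_neg (by omega), if_pos (by omega)]
    rw [h1, extTrips_get_y]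
    simp [tripTEdges]
  have hz : ∀ j : Fin K,
      (⟨Sum.inl t, Sum.inr (Sum.inr j), B, 1⟩ : TEdge (V ⊕ (Fin K ⊕ Fin K))) ∈
        inducedTG (extTrips trips K s t) τ' := by
    intro j
    refine mem_inducedTG (trips.length + K + j.1) (by rw [extTrips_length]; omega) ?_
    have h1 : τ' (trips.length + K + j.1) = B := by
      simp only [hτ']; rw [if_neg (by omega), if_neg (by omega)]
    rw [h1, extTrips_get_z]
    simp [tripTEdges]
  have hlift : ∀ f ∈ inducedTG trips τ, liftT Sum.inl f ∈ inducedTG (extTrips trips K s t) τ' := by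
    rintro f ⟨i, hf⟩
    refine mem_inducedTG i.1 (by rw [extTrips_length]; omega) ?_
    have h1 : τ' i.1 = τ i.1 := by simp only [hτ']; rw [if_pos i.2]
    rw [h1, extTrips_get_left trips K s t i.1 i.2, tripTEdges_map]
    exact List.mem_map_of_mem hf
  have hreach : ∀ i j : Fin K,
      TReachable (inducedTG (extTrips trips K s t) τ') (Sum.inr (Sum.inl i)) (Sum.inr (Sum.inr j)) := by
    intro i j
    right
    set yE : TEdge (V ⊕ (Fin K ⊕ Fin K)) := ⟨Sum.inr (Sum.inl i), Sum.inl s, A, 1⟩ with hyE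
    set zE : TEdge (V ⊕ (Fin K ⊕ Fin K)) := ⟨Sum.inl t, Sum.inr (Sum.inr j), B, 1⟩ with hzE
    rcases hmid with hst' | ⟨p, hp, hhd, hlast⟩
    · refine ⟨[yE, zE], by simp, ?_, ?_, by simp [hyE], by simp [hzE]⟩
      · intro f hf
        simp at hf
        rcases hf with rfl | rfl
        exacts [hy i, hz j]
      · refine List.isChain_cons_cons.mpr ⟨⟨by simp [hyE, hzE, hst'], by simpa [hyE, hzE] using hAB⟩, by simp⟩
    · obtain ⟨hne, hG, hch, hhd', hlast'⟩ := hp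
      obtain ⟨f0, rest, rfl⟩ := List.exists_cons_of_ne_nil hne
      have hf0s : f0.tail = s := by simpa using hhd'
      obtain ⟨fl, hflmem, hflt⟩ := Option.map_eq_some_iff.mp hlast'
      refine ⟨yE :: (((f0 :: rest).map (liftT Sum.inl)) ++ [zE]), by simp, ?_, ?_, by simp [hyE],
        ?_⟩
      · intro f hf
        rw [List.mem_cons, List.mem_append, List.mem_singleton, List.mem_map] at hf
        rcases hf with rfl | ⟨g, hg, rfl⟩ | rfl
        · exact hy i
        · exact hlift g (hG g hg)
        · exact hz j
      · rw [List.Chain', List.isChain_cons]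
        constructor
        · intro b hb
          simp [liftT] at hb
          subst hb
          refine ⟨by simp [hyE, liftT, hf0s], ?_⟩
          have := hhd f0 (by simp)
          simpa [hyE, liftT] using this
        · rw [List.isChain_append]
          refine ⟨?_, by simp, ?_⟩
          · rw [List.isChain_map]
            refine (show List.IsChain _ _ from hch).imp ?_
            intro a b hab
            exact ⟨by simp [liftT, hab.1], by simpa [liftT] using hab.2⟩
          · intro x hx y hy'
            simp at hy'
            subst hy'
            rw [List.getLast?_map] at hx
            obtain ⟨w, hw, rfl⟩ := Option.map_eq_some_iff.mp hx
            rw [hflmem] at hw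
            injection hw with hw
            subst hw
            refine ⟨by simp [liftT, hzE, hflt], ?_⟩
            have := hlast fl (by rw [hflmem]; rfl)
            simpa [liftT, hzE] using this
      · rw [List.getLast?_cons, List.getLast?_append]
        simp [hzE]
  refine ⟨τ', ?_⟩
  have hcard : K ^ 2 = Nat.card (Fin K × Fin K) := by
    simp [Nat.card_eq_fintype_card]
    ring
  rw [hcard, reachCount]
  exact Nat.card_le_card_of_injective
    (fun ij => ⟨(Sum.inr (Sum.inl ij.1), Sum.inr (Sum.inr ij.2)), hreach ij.1 ij.2⟩)
    (by
      intro a b hab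
      simp [Subtype.ext_iff, Prod.ext_iff] at hab
      exact Prod.ext hab.1 hab.2)
end

section
/- Consider the variable-gadget trip network (D,𝕋): D has the seven nodes t¹,t²,f¹,f²,a¹,a²,a³ and the weight-1 edges (t¹,a³),(a³,f²),(a¹,a²),(a²,a³),(f¹,a¹),(a¹,t²) together with their reverse edges, and 𝕋 consists of the six trips T^t=⟨t¹,a³,f²⟩, T^f=⟨f¹,a¹,t²⟩, T^a=⟨a¹,a²,a³⟩ and their reverse trips. Then there is no temporalisation τ of (D,𝕋) such that both f² is τ-reachable from f¹ and t² is τ-reachable from t¹. -/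
/-- The seven nodes of the variable gadget. -/
inductive GN : Type
  | t1 | t2 | f1 | f2 | a1 | a2 | a3
  deriving DecidableEq

/-- The six trips of the variable gadget: `T^t = ⟨t¹,a³,f²⟩`, `T^f = ⟨f¹,a¹,t²⟩`,
`T^a = ⟨a¹,a²,a³⟩` and their reverse trips (all edge weights equal `1`). -/
def gadgetTrips : List (List (DEdge GN)) :=
  [ [⟨GN.t1, GN.a3, 1⟩, ⟨GN.a3, GN.f2, 1⟩],
    [⟨GN.f1, GN.a1, 1⟩, ⟨GN.a1, GN.t2, 1⟩],
    [⟨GN.a1, GN.a2, 1⟩, ⟨GN.a2, GN.a3, 1⟩],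
    [⟨GN.f2, GN.a3, 1⟩, ⟨GN.a3, GN.t1, 1⟩],
    [⟨GN.t2, GN.a1, 1⟩, ⟨GN.a1, GN.f1, 1⟩],
    [⟨GN.a3, GN.a2, 1⟩, ⟨GN.a2, GN.a1, 1⟩] ]

/-- Explicit description of the 12 temporal edges of the induced temporal graph. -/
lemma gadget_mem {τ : ℕ → ℝ} {e : TEdge GN} (he : e ∈ inducedTG gadgetTrips τ) :
    e = ⟨GN.t1, GN.a3, τ 0, 1⟩ ∨ e = ⟨GN.a3, GN.f2, τ 0 + 1, 1⟩ ∨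
    e = ⟨GN.f1, GN.a1, τ 1, 1⟩ ∨ e = ⟨GN.a1, GN.t2, τ 1 + 1, 1⟩ ∨
    e = ⟨GN.a1, GN.a2, τ 2, 1⟩ ∨ e = ⟨GN.a2, GN.a3, τ 2 + 1, 1⟩ ∨
    e = ⟨GN.f2, GN.a3, τ 3, 1⟩ ∨ e = ⟨GN.a3, GN.t1, τ 3 + 1, 1⟩ ∨
    e = ⟨GN.t2, GN.a1, τ 4, 1⟩ ∨ e = ⟨GN.a1, GN.f1, τ 4 + 1, 1⟩ ∨
    e = ⟨GN.a3, GN.a2, τ 5, 1⟩ ∨ e = ⟨GN.a2, GN.a1, τ 5 + 1, 1⟩ := by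
  obtain ⟨i, hi⟩ := he
  fin_cases i <;> simp [gadgetTrips, tripTEdges] at hi <;> tauto

lemma gadget_travel {τ : ℕ → ℝ} {e : TEdge GN} (he : e ∈ inducedTG gadgetTrips τ) :
    e.travel = 1 := by
  rcases gadget_mem he with h | h | h | h | h | h | h | h | h | h | h | h <;> subst h <;> rfl

/-- Propagating a monotone invariant along a temporal path. -/
lemma path_inv {V : Type} (G : Set (TEdge V)) (I : V → ℝ → Prop)
    (mono : ∀ v s t, s ≤ t → I v s → I v t)
    (trav : ∀ e ∈ G, TEdge.travel e = 1)
    (step : ∀ e ∈ G, I e.tail e.time → I e.head (e.time + 1)) :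
    ∀ (p : List (TEdge V)) (e : TEdge V), (∀ f ∈ e :: p, f ∈ G) →
      ((e :: p).Chain' fun a b => a.head = b.tail ∧ a.time + a.travel ≤ b.time) →
      I e.tail e.time → ∃ t, I ((e :: p).getLast (by simp)).head t := by
  intro p
  induction p with
  | nil => intro e hG _ hI; exact ⟨e.time + 1, step e (hG e (by simp)) hI⟩
  | cons f p ih =>
      intro e hG hc hI
      obtain ⟨⟨hhd, htime⟩, hc'⟩ := List.isChain_cons_cons.mp hc
      have heG : e ∈ G := hG e (by simp)
      have h1 : I f.tail f.time := by
        have h2 := step e heG hI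
        rw [trav e heG] at htime
        exact hhd ▸ mono _ _ _ htime h2
      have h3 := ih f (fun g hg => hG g (by simp [hg])) hc' h1
      simpa using h3

/-- Extracting an invariant conclusion from temporal reachability. -/
lemma reach_inv {V : Type} (G : Set (TEdge V)) (I : V → ℝ → Prop)
    (mono : ∀ v s t, s ≤ t → I v s → I v t)
    (trav : ∀ e ∈ G, TEdge.travel e = 1)
    (step : ∀ e ∈ G, I e.tail e.time → I e.head (e.time + 1))
    {u v : V} (hbase : ∀ t, I u t) (h : TReachable G u v) (hne : u ≠ v) :
    ∃ t, I v t := by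
  rcases h with rfl | ⟨p, hp⟩
  · exact absurd rfl hne
  obtain ⟨hne', hmem, hchain, hhead, hlast⟩ := hp
  match p, hne' with
  | e :: p', _ =>
    have he : e.tail = u := by simpa using hhead
    obtain ⟨t, ht⟩ := path_inv G I mono trav step p' e hmem hchain (he ▸ hbase e.time)
    have hv : ((e :: p').getLast (by simp)).head = v := by
      rw [List.getLast?_eq_getLast (l := e :: p') (by simp)] at hlast
      simpa using hlast
    exact ⟨t, hv ▸ ht⟩

/-- Invariant for temporal paths starting at `f¹`. -/
def If (τ : ℕ → ℝ) : GN → ℝ → Prop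
  | .f1, _ => True
  | .a1, t => τ 1 + 1 ≤ t
  | .t2, t => τ 1 + 2 ≤ t
  | .a2, t => τ 1 + 1 ≤ τ 2 ∧ τ 2 + 1 ≤ t
  | .a3, t => τ 1 + 1 ≤ τ 2 ∧ τ 2 + 2 ≤ t
  | .t1, t => τ 1 + 1 ≤ τ 2 ∧ τ 2 + 1 ≤ τ 3 ∧ τ 3 + 2 ≤ t
  | .f2, t => τ 1 + 1 ≤ τ 2 ∧ τ 2 + 1 ≤ τ 0 ∧ τ 0 + 2 ≤ t

/-- Invariant for temporal paths starting at `t¹`. -/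
def Jf (τ : ℕ → ℝ) : GN → ℝ → Prop
  | .t1, _ => True
  | .a3, t => τ 0 + 1 ≤ t
  | .f2, t => τ 0 + 2 ≤ t
  | .a2, t => τ 0 + 1 ≤ τ 5 ∧ τ 5 + 1 ≤ t
  | .a1, t => τ 0 + 1 ≤ τ 5 ∧ τ 5 + 2 ≤ t
  | .t2, t => τ 0 + 1 ≤ τ 5 ∧ τ 5 + 1 ≤ τ 1 ∧ τ 1 + 2 ≤ t
  | .f1, t => τ 0 + 1 ≤ τ 5 ∧ τ 5 + 1 ≤ τ 4 ∧ τ 4 + 2 ≤ t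

lemma If_mono (τ : ℕ → ℝ) : ∀ v s t, s ≤ t → If τ v s → If τ v t := by
  intro v s t hst h
  cases v <;> simp only [If] at h ⊢ <;>
    first
      | trivial
      | linarith
      | exact ⟨h.1, by linarith [h.2]⟩
      | exact ⟨h.1, h.2.1, by linarith [h.2.2]⟩

lemma Jf_mono (τ : ℕ → ℝ) : ∀ v s t, s ≤ t → Jf τ v s → Jf τ v t := by
  intro v s t hst h
  cases v <;> simp only [Jf] at h ⊢ <;>
    first
      | trivial
      | linarith
      | exact ⟨h.1, by linarith [h.2]⟩
      | exact ⟨h.1, h.2.1, by linarith [h.2.2]⟩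

lemma If_step (τ : ℕ → ℝ) :
    ∀ e ∈ inducedTG gadgetTrips τ, If τ e.tail e.time → If τ e.head (e.time + 1) := by
  intro e he h
  rcases gadget_mem he with h' | h' | h' | h' | h' | h' | h' | h' | h' | h' | h' | h' <;>
    subst h' <;> simp only [If] at h ⊢ <;>
    (try obtain ⟨h1, h2⟩ := h) <;> (try obtain ⟨h2, h3⟩ := h2) <;>
    first
      | linarith
      | (refine ⟨?_, ?_⟩ <;> linarith)
      | (refine ⟨?_, ?_, ?_⟩ <;> linarith)

lemma Jf_step (τ : ℕ → ℝ) :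
    ∀ e ∈ inducedTG gadgetTrips τ, Jf τ e.tail e.time → Jf τ e.head (e.time + 1) := by
  intro e he h
  rcases gadget_mem he with h' | h' | h' | h' | h' | h' | h' | h' | h' | h' | h' | h' <;>
    subst h' <;> simp only [Jf] at h ⊢ <;>
    (try obtain ⟨h1, h2⟩ := h) <;> (try obtain ⟨h2, h3⟩ := h2) <;>
    first
      | linarith
      | (refine ⟨?_, ?_⟩ <;> linarith)
      | (refine ⟨?_, ?_, ?_⟩ <;> linarith)

/-- No temporalisation of the variable gadget makes both `f²`
reachable from `f¹` and `t²` reachable from `t¹`. -/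
theorem gadget_not_both_activated :
    ¬ ∃ τ : ℕ → ℝ,
        TReachable (inducedTG gadgetTrips τ) GN.f1 GN.f2 ∧
        TReachable (inducedTG gadgetTrips τ) GN.t1 GN.t2 := by
  rintro ⟨τ, hF, hT⟩
  obtain ⟨t1, ht1⟩ := reach_inv (inducedTG gadgetTrips τ) (If τ) (If_mono τ)
    (fun e he => gadget_travel he) (If_step τ) (u := GN.f1) (v := GN.f2) (fun _ => trivial) hF (by simp)
  obtain ⟨t2, ht2⟩ := reach_inv (inducedTG gadgetTrips τ) (Jf τ) (Jf_mono τ)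
    (fun e he => gadget_travel he) (Jf_step τ) (u := GN.t1) (v := GN.t2) (fun _ => trivial) hT (by simp)
  simp only [If] at ht1
  simp only [Jf] at ht2
  linarith [ht1.1, ht1.2.1, ht2.1, ht2.2.1]
end
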